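/- Fix N ≥ 1 and a measure α on ℝ with finite moments A_n = ∫ x^n dα(x). Define ⟨s_λ⟩ = const · det[A_{λ_i + 2N − i − j}]_{i,j=1}^N for partitions λ with at most N parts (with the normalizing constant chosen so that ⟨s_∅⟩ = 1), and ⟨s_λ⟩ = 0 if λ has more than N parts. Then this functional is Giambelli compatible: for every partition λ = (p_1,…,p_d | q_1,…,q_d), ⟨s_λ⟩ = det[⟨s_{(p_i|q_j)}⟩]_{i,j=1}^d. -/

import Mathlib

/-!
The average is `c · φ_g(μ)`, where `φ_g(μ) = det[g (μ_i + N - 1 - i) j]` is the minor on the rows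
`μ_i + N - 1 - i` of the `ℕ × N` Hankel matrix `g n j = A_{n + N - 1 - j}`, and Giambelli
compatibility holds for every `g` with `c · φ_g(∅) = 1`. Then the block `W` of rows `N - 1, …, 0`
is invertible, and replacing `g` by `g W⁻¹` multiplies every minor by `c` and makes row `N - 1 - r`
the unit vector `e_r`. If `μ` has Frobenius coordinates `p_i = μ_i - i - 1`, `q_j = μ'_j - j - 1`
(`i, j < d`), its rows with `d ≤ i < N` are `N - 1 - (i - μ_i)`, and these values `i - μ_i` list,
in increasing order, the complement of `{q_j}` in `[0, N)`. So the minor is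
`det[g (p_i + N) q_j]_{i,j<d}` times the sign of the permutation listing first
`q_0 > … > q_{d-1}` and then the remaining values in increasing order.
That sign is `∏ (-1)^{q_j}`, which is also the product of the signs of the hook minors
`φ_g((p_i|q_j)) = (-1)^{q_j} g (p_i + N) q_j`.

Partitions are 0-indexed: with `i, j` running over `Fin N` the exponent `λ_i + 2N − i − j`
(1-indexed) becomes `μ i + 2(N−1) − i − j`.
-/

noncomputable section
open MeasureTheory

/-- The hook partition `(p|q) = (p+1, 1^q)` (0-indexed parts). -/
def hookP (p q : ℕ) : ℕ → ℕ := fun i => if i = 0 then p + 1 else if i ≤ q then 1 else 0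

/-- The conjugate partition `μ'_i = #{j : μ_j > i}` (0-indexed). -/
def conjP (μ : ℕ → ℕ) (i : ℕ) : ℕ := Nat.card {j : ℕ // i < μ j}

/-- The moments of the measure `α`. -/
def moment (α : Measure ℝ) (n : ℕ) : ℝ := ∫ x, x ^ n ∂α

/-- The orthogonal-polynomial-ensemble average of the Schur function `s_μ`:
`const · det[A_{μ_i + 2(N−1) − i − j}]` if `μ` has at most `N` parts, `0` otherwise. -/
def opeAvg (α : Measure ℝ) (N : ℕ) (c : ℝ) (μ : ℕ → ℕ) : ℝ :=
  if μ N = 0 then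
    c * Matrix.det (Matrix.of fun i j : Fin N =>
      moment α (μ i + 2 * (N - 1) - i - j))
  else 0

open Matrix Equiv

theorem lt_conjP_iff {ν : ℕ → ℕ} (hν : Antitone ν) {k : ℕ} (hk : ∀ i, k ≤ i → ν i = 0)
    (t j : ℕ) : j < conjP ν t ↔ t < ν j := by
  have hfin : {i | t < ν i}.Finite :=
    (Set.finite_Iio k).subset fun i hi => by
      by_contra hik
      simp only [Set.mem_ofPred_eq, hk i (not_lt.mp hik)] at hi
      omega
  change j < Nat.card {i | t < ν i} ↔ _
  rw [Nat.card_coe_set_eq]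
  constructor
  · intro hj
    by_contra hνj
    have hsub : {i | t < ν i} ⊆ Set.Iio j := fun i hi => by
      by_contra hij
      exact hνj (lt_of_lt_of_le hi (hν (not_lt.mp hij)))
    have := Set.ncard_le_ncard hsub (Set.finite_Iio j)
    rw [Set.ncard_Iio_nat] at this
    omega
  · intro hνj
    have hsub : Set.Iic j ⊆ {i | t < ν i} := fun i hi => lt_of_lt_of_le hνj (hν hi)
    have := Set.ncard_le_ncard hsub hfin
    rw [Set.ncard_Iic_nat] at this
    omega

theorem hookP_eq_zero_iff (p q i : ℕ) : hookP p q i = 0 ↔ q < i := by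
  grind [hookP]

theorem hookP_antitone (p q : ℕ) : Antitone (hookP p q) := fun a b hab => by
  grind [hookP]

theorem lt_hookP_iff (p q i : ℕ) : i < hookP p q i ↔ i < 1 := by
  grind [hookP]

theorem conjP_hookP_zero (p q : ℕ) : conjP (hookP p q) 0 = q + 1 := by
  have h := lt_conjP_iff (hookP_antitone p q) (fun i => (hookP_eq_zero_iff p q i).mpr) 0
  have h₁ := h q
  have h₂ := h (q + 1)
  rw [Nat.pos_iff_ne_zero, ne_eq, hookP_eq_zero_iff] at h₁ h₂
  omega

section Shuffle

variable {N : ℕ}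

def IsShuffle (d : ℕ) (q : ℕ → ℕ) (π : Perm (Fin N)) : Prop :=
  (∀ t : Fin N, (t : ℕ) < d → (π t : ℕ) = q t) ∧
    ∀ s t : Fin N, d ≤ (s : ℕ) → s < t → π s < π t

theorem IsShuffle.eq {d : ℕ} {q : ℕ → ℕ} {π₁ π₂ : Perm (Fin N)} (h₁ : IsShuffle d q π₁)
    (h₂ : IsShuffle d q π₂) : π₁ = π₂ := by
  set ρ := π₂⁻¹ * π₁
  have hlow : ∀ t : Fin N, (t : ℕ) < d → ρ t = t := fun t ht => by
    rw [Perm.mul_apply, Perm.inv_eq_iff_eq]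
    exact Fin.ext ((h₁.1 t ht).trans (h₂.1 t ht).symm)
  have hhigh : ∀ s : Fin N, d ≤ (s : ℕ) → d ≤ (ρ s : ℕ) := fun s hs => by
    by_contra hρs
    have := hlow (ρ s) (not_le.mp hρs)
    rw [ρ.injective.eq_iff] at this
    omega
  have hmono : StrictMono ρ := fun s t hst => by
    by_cases hs : (s : ℕ) < d
    · by_cases ht : (t : ℕ) < d
      · rwa [hlow s hs, hlow t ht]
      · exact Fin.lt_def.mpr (by have := hhigh t (not_lt.mp ht); rw [hlow s hs]; omega)
    · by_contra hts
      have hlt := lt_of_le_of_ne (not_lt.mp hts) (ρ.injective.ne hst.ne')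
      have := h₂.2 _ _ (hhigh t (by omega)) hlt
      simp only [ρ, Perm.mul_apply, Perm.coe_inv, apply_symm_apply] at this
      exact (h₁.2 s t (not_lt.mp hs) hst).not_gt this
  have : ρ = 1 := Equiv.ext (congrFun hmono.eq_id)
  rwa [inv_mul_eq_one, eq_comm] at this

theorem IsShuffle.mul_cycleRange_inv {d : ℕ} {q : ℕ → ℕ} {π : Perm (Fin N)}
    (hπ : IsShuffle d (fun t => q (t + 1)) π) {m : Fin N} (hm : (m : ℕ) = q 0)
    (hq0 : ∀ t < d, q (t + 1) < q 0) (hfix : ∀ s : Fin N, m ≤ s → π s = s) :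
    IsShuffle (d + 1) q (π * (Fin.cycleRange m)⁻¹) := by
  have : NeZero N := ⟨m.pos.ne'⟩
  have hcyc : ∀ y, (π * (Fin.cycleRange m)⁻¹) (Fin.cycleRange m y) = π y := by simp
  have hshift : ∀ x : Fin N, 0 < (x : ℕ) → x ≤ m →
      (π * (Fin.cycleRange m)⁻¹) x = π ⟨x - 1, by omega⟩ := fun x hx hxm => by
    rw [← hcyc]
    congr 1
    ext
    rw [Fin.coe_cycleRange_of_lt (Fin.lt_def.mpr (by rw [Fin.le_def] at hxm; simp; omega))]
    exact (Nat.sub_add_cancel hx).symm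
  have hhigh : ∀ x : Fin N, m < x → (π * (Fin.cycleRange m)⁻¹) x = x := fun x hx => by
    have := hcyc x
    rwa [Fin.cycleRange_of_gt hx, hfix x hx.le] at this
  refine ⟨fun t ht => ?_, fun s t hs hst => ?_⟩
  · rcases t with ⟨_ | t, htN⟩
    · change ((π * (Fin.cycleRange m)⁻¹) ⟨0, htN⟩ : ℕ) = q 0
      rw [show (⟨0, htN⟩ : Fin N) = Fin.cycleRange m m by simp, hcyc, hfix m le_rfl, hm]
    · have htd : t < d := by simp only at ht; omega
      have htm : t + 1 ≤ q 0 := by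
        by_contra htm
        have h : t = q (t + 1) := by
          simpa only [hfix ⟨t, by omega⟩ (Fin.le_def.mpr (show (m : ℕ) ≤ t by omega))] using
            hπ.1 ⟨t, by omega⟩ htd
        have := hq0 t htd
        omega
      rw [hshift _ (by simp) (Fin.le_def.mpr (show t + 1 ≤ (m : ℕ) by omega))]
      exact hπ.1 ⟨t, by omega⟩ htd
  · rw [Fin.lt_def] at hst
    by_cases ht : t ≤ m
    · rw [hshift s (by omega) ((Fin.lt_def.mpr hst).le.trans ht), hshift t (by omega) ht]
      exact hπ.2 _ _ (by simp; omega) (Fin.lt_def.mpr (by simp; omega))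
    · rw [not_le] at ht
      rw [hhigh t ht]
      by_cases hs : s ≤ m
      · rw [hshift s (by omega) hs]
        have := hπ.2 ⟨s - 1, by omega⟩ m (by simp; omega)
          (Fin.lt_def.mpr (by rw [Fin.le_def] at hs; simp; omega))
        rw [hfix m le_rfl] at this
        exact this.trans ht
      · rw [hhigh s (not_le.mp hs)]
        exact Fin.lt_def.mpr hst

theorem exists_isShuffle (d : ℕ) (q : ℕ → ℕ) (hq : ∀ s t, s < t → t < d → q t < q s)
    (hqN : ∀ t < d, q t < N) :
    ∃ π : Perm (Fin N), IsShuffle d q π ∧ (∀ s : Fin N, (∀ t < d, q t < s) → π s = s) ∧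
      Perm.sign π = (-1) ^ ∑ t ∈ Finset.range d, q t := by
  -- Fixing everything above `max q` lets the step place `q 0` by the cycle `(0 1 … q 0)`.
  induction d generalizing q with
  | zero => exact ⟨1, ⟨fun t ht => absurd ht (Nat.not_lt_zero _), fun _ _ _ h => h⟩,
      fun _ _ => rfl, by simp⟩
  | succ d ih =>
    obtain ⟨π, hπ, hfix, hsign⟩ := ih (fun t => q (t + 1))
      (fun s t hst htd => hq _ _ (by omega) (by omega)) (fun t ht => hqN _ (by omega))
    have hq0 : ∀ t < d, q (t + 1) < q 0 := fun t ht => hq 0 (t + 1) (by omega) (by omega)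
    let m : Fin N := ⟨q 0, hqN 0 (by omega)⟩
    have hfix' : ∀ s : Fin N, m ≤ s → π s = s := fun s hs =>
      hfix s fun t ht => (hq0 t ht).trans_le hs
    refine ⟨π * (Fin.cycleRange m)⁻¹, hπ.mul_cycleRange_inv rfl hq0 hfix', fun s hs => ?_, ?_⟩
    · have hms : m < s := Fin.lt_def.mpr (hs 0 (by omega))
      rw [Perm.mul_apply, Perm.inv_eq_iff_eq.mpr (Fin.cycleRange_of_gt hms).symm, hfix' s hms.le]
    · rw [Perm.sign_mul, Perm.sign_inv, Fin.sign_cycleRange, hsign, Finset.sum_range_succ',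
        pow_add]

theorem IsShuffle.sign {d : ℕ} {q : ℕ → ℕ} {π : Perm (Fin N)} (h : IsShuffle d q π)
    (hq : ∀ s t, s < t → t < d → q t < q s) (hqN : ∀ t < d, q t < N) :
    Perm.sign π = (-1) ^ ∑ t ∈ Finset.range d, q t := by
  obtain ⟨π', h', -, hsign⟩ := exists_isShuffle d q hq hqN
  rw [h.eq h', hsign]

end Shuffle

theorem Matrix.det_eq_det_submatrix_of_row_eq_one {R n ι : Type*} [CommRing R] [Fintype n]
    [DecidableEq n] [Fintype ι] [DecidableEq ι] (M : Matrix n n R) {q : ι → n}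
    (hq : Function.Injective q) (h : ∀ r ∉ Set.range q, M r = (1 : Matrix n n R) r) :
    M.det = (M.submatrix q q).det := by
  classical
  let e : ι ⊕ {r // r ∉ Set.range q} ≃ n :=
    ((Equiv.ofInjective q hq).sumCongr (Equiv.refl _)).trans (Equiv.sumCompl _)
  have hblock : M.submatrix e e = fromBlocks (M.submatrix q q)
      (of fun s (r : {r // r ∉ Set.range q}) => M (q s) r) 0 1 := by
    ext (s | r) (t | r')
    · rfl
    · rfl
    · simp [e, h r r.2, one_apply_ne fun hrt : (r : n) = q t => r.2 ⟨t, hrt.symm⟩]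
    · simp [e, h r r.2, one_apply, Subtype.ext_iff]
  rw [← det_submatrix_equiv_self e M, hblock, det_fromBlocks_zero₂₁, det_one, mul_one]

section Frobenius

variable {ν : ℕ → ℕ}

theorem conjP_sub_strictAnti (hν : Antitone ν) {k : ℕ} (hk : ∀ i, k ≤ i → ν i = 0) {d : ℕ}
    (hd : ∀ i, i < d ↔ i < ν i) {s t : ℕ} (hst : s < t) (htd : t < d) :
    conjP ν t - (t + 1) < conjP ν s - (s + 1) := by
  have hconj := lt_conjP_iff hν hk
  have ht := hconj t t
  have hts := hconj s (conjP ν t - 1)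
  have htt := hconj t (conjP ν t - 1)
  have := hν hst.le
  have := hd t
  omega

theorem conjP_sub_lt (hν : Antitone ν) {k : ℕ} (hk : ∀ i, k ≤ i → ν i = 0) {d : ℕ}
    (hd : ∀ i, i < d ↔ i < ν i) {N : ℕ} (hνN : ν N = 0) {t : ℕ} (ht : t < d) :
    conjP ν t - (t + 1) < N := by
  have := lt_conjP_iff hν hk t N
  have := lt_conjP_iff hν hk t t
  have := hd t
  omega

theorem exists_isShuffle_conjP {N : ℕ} (hν : Antitone ν) {k : ℕ} (hk : ∀ i, k ≤ i → ν i = 0)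
    {d : ℕ} (hd : ∀ i, i < d ↔ i < ν i) (hνN : ν N = 0) :
    ∃ π : Perm (Fin N), IsShuffle d (fun t => conjP ν t - (t + 1)) π ∧
      ∀ s : Fin N, d ≤ (s : ℕ) → (π s : ℕ) = s - ν s := by
  have hcompl : ∀ s t, d ≤ s → t < d → s - ν s ≠ conjP ν t - (t + 1) := fun s t hs ht => by
    have := lt_conjP_iff hν hk t s
    have := lt_conjP_iff hν hk t t
    have := hd s
    have := hd t
    omega
  have hmono : ∀ s t, d ≤ s → s < t → s - ν s < t - ν t := fun s t hs hst => by
    have := hν hst.le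
    have := hd s
    omega
  let f : Fin N → Fin N := fun s =>
    if h : (s : ℕ) < d then ⟨conjP ν s - (s + 1), conjP_sub_lt hν hk hd hνN h⟩
    else ⟨s - ν s, by omega⟩
  have hf : Function.Injective f := fun a b hab => by
    have hab := congrArg Fin.val hab
    simp only [f] at hab
    split_ifs at hab with ha hb hb
    · rcases lt_trichotomy (a : ℕ) b with h | h | h
      · exact absurd hab (conjP_sub_strictAnti hν hk hd h hb).ne'
      · exact Fin.ext h
      · exact absurd hab (conjP_sub_strictAnti hν hk hd h ha).ne
    · exact absurd hab.symm (hcompl _ _ (not_lt.mp hb) ha)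
    · exact absurd hab (hcompl _ _ (not_lt.mp ha) hb)
    · rcases lt_trichotomy (a : ℕ) b with h | h | h
      · exact absurd hab (hmono _ _ (not_lt.mp ha) h).ne
      · exact Fin.ext h
      · exact absurd hab (hmono _ _ (not_lt.mp hb) h).ne'
  refine ⟨Equiv.ofBijective f (Finite.injective_iff_bijective.mp hf),
    ⟨fun t ht => by simp [f, ht], fun s t hs hst => ?_⟩, fun s hs => by simp [f, not_lt.mpr hs]⟩
  have ht : d ≤ (t : ℕ) := hs.trans (Fin.lt_def.mp hst).le
  simpa [Fin.lt_def, f, not_lt.mpr hs, not_lt.mpr ht] using hmono _ _ hs hst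

end Frobenius

section SchurDet

variable {R : Type*} [CommRing R] {N : ℕ}

def schurDet (g : ℕ → Fin N → R) (ν : ℕ → ℕ) : R :=
  (of fun i j : Fin N => g (ν i + (N - 1) - i) j).det

theorem schurDet_vecMul (g : ℕ → Fin N → R) (B : Matrix (Fin N) (Fin N) R) (ν : ℕ → ℕ) :
    schurDet (fun n => g n ᵥ* B) ν = schurDet g ν * B.det := by
  rw [schurDet, schurDet, ← det_mul]
  congr 1

theorem schurDet_eq_sign_mul_det {g : ℕ → Fin N → R}
    (hg : ∀ r : Fin N, g (N - 1 - r) = (1 : Matrix (Fin N) (Fin N) R) r)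
    {ν : ℕ → ℕ} (hν : Antitone ν) {k : ℕ} (hk : ∀ i, k ≤ i → ν i = 0) {d : ℕ}
    (hd : ∀ i, i < d ↔ i < ν i) (hνN : ν N = 0) (q : Fin d → Fin N)
    (hq : ∀ j, (q j : ℕ) = conjP ν j - (j + 1)) :
    schurDet g ν = (-1) ^ (∑ t ∈ Finset.range d, (conjP ν t - (t + 1))) *
      (of fun i j : Fin d => g (ν i - (i + 1) + N) (q j)).det := by
  obtain ⟨π, hπ, hπν⟩ := exists_isShuffle_conjP (N := N) hν hk hd hνN
  have hdN : d ≤ N := by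
    have := hd N
    omega
  have hπq : ∀ t : Fin d, π (t.castLE hdN) = q t := fun t =>
    Fin.ext ((hπ.1 _ t.isLt).trans (hq t).symm)
  have hqinj : Function.Injective q := by
    rw [show q = π ∘ Fin.castLE hdN from funext fun t => (hπq t).symm]
    exact π.injective.comp (Fin.castLE_injective hdN)
  have hsign := hπ.sign (fun s t => conjP_sub_strictAnti hν hk hd)
    (fun t ht => hq ⟨t, ht⟩ ▸ (q ⟨t, ht⟩).isLt)
  set M := of fun i j : Fin N => g (ν i + (N - 1) - i) j
  have hrows :
      ∀ r ∉ Set.range q, M.submatrix π.symm id r = (1 : Matrix (Fin N) (Fin N) R) r := by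
    intro r hr
    obtain ⟨s, rfl⟩ := π.surjective r
    have hs : d ≤ (s : ℕ) := by
      by_contra hs
      exact hr ⟨⟨s, by omega⟩, by rw [← hπq]; rfl⟩
    have hνs := hd s
    ext j
    rw [submatrix_apply, symm_apply_apply, id]
    change g _ j = _
    rw [show ν s + (N - 1) - s = N - 1 - (π s : ℕ) by rw [hπν s hs]; omega, hg]
  calc schurDet g ν = ((M.submatrix π.symm id).submatrix π id).det := by simp [schurDet, M]
    _ = Perm.sign π * ((M.submatrix π.symm id).submatrix q q).det := by
      rw [det_permute, ← det_eq_det_submatrix_of_row_eq_one _ hqinj hrows]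
    _ = _ := by
      rw [hsign]
      congr 1
      · simp
      · congr 1
        ext i j
        simp only [submatrix_apply, ← hπq, symm_apply_apply, M, of_apply]
        congr 1
        have := (hd i).mp i.isLt
        rw [Fin.val_castLE]
        omega

theorem schurDet_hookP {g : ℕ → Fin N → R}
    (hg : ∀ r : Fin N, g (N - 1 - r) = (1 : Matrix (Fin N) (Fin N) R) r) (p q : ℕ) (hq : q < N) :
    schurDet g (hookP p q) = (-1) ^ q * g (p + N) ⟨q, hq⟩ := by
  rw [schurDet_eq_sign_mul_det hg (hookP_antitone p q)
    (fun i hi => (hookP_eq_zero_iff p q i).mpr hi) (fun i => (lt_hookP_iff p q i).symm)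
    ((hookP_eq_zero_iff p q N).mpr hq) (fun _ => ⟨q, hq⟩) (fun _ => by simp [conjP_hookP_zero]),
    Finset.sum_range_one, conjP_hookP_zero, det_unique]
  simp [hookP]

theorem schurDet_giambelli_of_row_eq_one {g : ℕ → Fin N → R}
    (hg : ∀ r : Fin N, g (N - 1 - r) = (1 : Matrix (Fin N) (Fin N) R) r)
    {ν : ℕ → ℕ} (hν : Antitone ν) {k : ℕ} (hk : ∀ i, k ≤ i → ν i = 0) {d : ℕ}
    (hd : ∀ i, i < d ↔ i < ν i) (hνN : ν N = 0) :
    schurDet g ν = (of fun i j : Fin d =>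
      schurDet g (hookP (ν i - (i + 1)) (conjP ν j - (j + 1)))).det := by
  have hqN (j : Fin d) := conjP_sub_lt hν hk hd hνN j.isLt
  simp_rw [schurDet_hookP hg _ _ (hqN _)]
  rw [schurDet_eq_sign_mul_det hg hν hk hd hνN (fun j => ⟨_, hqN j⟩) (fun _ => rfl),
    ← Fin.sum_univ_eq_sum_range, ← Finset.prod_pow_eq_pow_sum, ← det_mul_row]
  rfl

theorem schurDet_giambelli {g : ℕ → Fin N → R} {c : R} (hc : c * schurDet g (fun _ => 0) = 1)
    {ν : ℕ → ℕ} (hν : Antitone ν) {k : ℕ} (hk : ∀ i, k ≤ i → ν i = 0) {d : ℕ}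
    (hd : ∀ i, i < d ↔ i < ν i) (hνN : ν N = 0) :
    c * schurDet g ν = (of fun i j : Fin d =>
      c * schurDet g (hookP (ν i - (i + 1)) (conjP ν j - (j + 1)))).det := by
  set W : Matrix (Fin N) (Fin N) R := of fun r j => g (N - 1 - r) j
  have hW : c * W.det = 1 := by simpa [schurDet] using hc
  have hWunit : IsUnit W.det := IsUnit.of_mul_eq_one c ((mul_comm _ _).trans hW)
  have hWinv : W⁻¹.det = c := by
    rw [det_nonsing_inv, ← mul_one (Ring.inverse _), ← hW, mul_comm c,
      Ring.inverse_mul_cancel_left _ _ hWunit]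
  have hnormal :
      ∀ r : Fin N, g (N - 1 - r) ᵥ* W⁻¹ = (1 : Matrix (Fin N) (Fin N) R) r := fun r => by
    rw [← mul_nonsing_inv W hWunit]
    rfl
  simpa only [schurDet_vecMul, hWinv, mul_comm _ c] using
    schurDet_giambelli_of_row_eq_one (g := fun n => g n ᵥ* W⁻¹) hnormal hν hk hd hνN

end SchurDet

theorem opeAvg_eq_mul_schurDet (α : Measure ℝ) (N : ℕ) (c : ℝ) {ν : ℕ → ℕ} (hνN : ν N = 0) :
    opeAvg α N c ν = c * schurDet (fun n (j : Fin N) => moment α (n + (N - 1 - j))) ν := by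
  rw [opeAvg, if_pos hνN, schurDet]
  congr 2
  ext i j
  simp only [of_apply]
  congr 1
  omega

theorem ope_giambelli_compatible_general (α : Measure ℝ)
    (N : ℕ) (c : ℝ)
    (hc : opeAvg α N c (fun _ => 0) = 1)
    (μ : ℕ → ℕ) (hμ : Antitone μ) (k : ℕ) (hk : ∀ i, k ≤ i → μ i = 0)
    (d : ℕ) (hd : ∀ i, i < d ↔ i < μ i) :
    opeAvg α N c μ =
      Matrix.det (Matrix.of fun i j : Fin d =>
        opeAvg α N c (hookP (μ i - (i + 1)) (conjP μ j - (j + 1)))) := by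
  by_cases hμN : μ N = 0
  · rw [opeAvg_eq_mul_schurDet α N c hμN,
      schurDet_giambelli ((opeAvg_eq_mul_schurDet α N c rfl).symm.trans hc) hμ hk hd hμN]
    congr 1
    ext i j
    exact (opeAvg_eq_mul_schurDet α N c
      ((hookP_eq_zero_iff _ _ N).mpr (conjP_sub_lt hμ hk hd hμN j.isLt))).symm
  · have hd0 : 0 < d := (hd 0).mpr ((Nat.pos_of_ne_zero hμN).trans_le (hμ (Nat.zero_le N)))
    have hq0 : N ≤ conjP μ 0 - 1 := by
      have := lt_conjP_iff hμ hk 0 N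
      omega
    rw [opeAvg, if_neg hμN, eq_comm]
    refine det_eq_zero_of_column_eq_zero ⟨0, hd0⟩ fun i => ?_
    rw [of_apply, opeAvg, if_neg ((hookP_eq_zero_iff _ _ N).not.mpr (by simpa using hq0))]

theorem ope_giambelli_compatible (α : Measure ℝ)
    (hmom : ∀ n : ℕ, Integrable (fun x => x ^ n) α)
    (N : ℕ) (hN : 1 ≤ N) (c : ℝ)
    (hc : opeAvg α N c (fun _ => 0) = 1)
    (μ : ℕ → ℕ) (hμ : Antitone μ) (k : ℕ) (hk : ∀ i, k ≤ i → μ i = 0)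
    (d : ℕ) (hd : ∀ i, i < d ↔ i < μ i) :
    opeAvg α N c μ =
      Matrix.det (Matrix.of fun i j : Fin d =>
        opeAvg α N c (hookP (μ i - (i + 1)) (conjP μ j - (j + 1)))) :=
  ope_giambelli_compatible_general α N c hc μ hμ k hk d hd
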